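/- Assume ℕA is scored with respect to the finite family Φ. Then for every group homomorphism ψ : ℤ^d → ℤ with ψ(aᵢ) ≥ 0 for all i, the subgroup G_ψ of ℤ^d generated by {x ∈ ℕA : ψ(x) = 0} is saturated in ℤ^d: if x ∈ ℤ^d and k·x ∈ G_ψ for some integer k ≥ 1, then x ∈ G_ψ. (That is, for a scored semigroup, the group ℤ(A∩τ) generated by any face equals its own saturation.) -/

import Mathlib

/-!
Summing, over the facets `φ ∈ Φ`, an element of the face `F = {y ∈ ℕA : ψ y = 0}` on which `φ`
is positive (when there is one) gives `w ∈ F` such that every facet either vanishes on `F` or is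
positive on `w`. If `k • x ∈ G_ψ`, a facet vanishing on `F` vanishes on `x`, while a facet
positive on `w` takes arbitrarily large values on `x + N • w`; these are values on `ℕA`, because
`φ(ℕA)` contains two consecutive integers (`φ` is surjective and `ℕA` generates `ℤ^d`) and hence
every large integer. Scoredness puts `x + N • w` in `ℕA`, hence in `F`, so that
`x = (x + N • w) - N • w ∈ G_ψ`.
-/

/-- The submonoid `ℕA` of `ℤ^d` generated by `a₁,…,a_n`. -/
def NA {d n : ℕ} (a : Fin n → Fin d → ℤ) : AddSubmonoid (Fin d → ℤ) :=
  AddSubmonoid.closure (Set.range a)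

/-- The subgroup `G_ψ = ℤ(A ∩ τ)` generated by the face `{x ∈ ℕA : ψ x = 0}`. -/
def Gface {d n : ℕ} (a : Fin n → Fin d → ℤ) (ψ : (Fin d → ℤ) →+ ℤ) :
    AddSubgroup (Fin d → ℤ) :=
  AddSubgroup.closure {x | x ∈ NA a ∧ ψ x = 0}

open Filter

section

variable {G : Type*} [AddCommGroup G]

theorem AddSubmonoid.exists_sub_eq_of_mem_closure (M : AddSubmonoid G) {x : G}
    (hx : x ∈ AddSubgroup.closure (M : Set G)) : ∃ u ∈ M, ∃ v ∈ M, u - v = x := by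
  induction hx using AddSubgroup.closure_induction with
  | mem y hy => exact ⟨y, hy, 0, M.zero_mem, sub_zero y⟩
  | zero => exact ⟨0, M.zero_mem, 0, M.zero_mem, sub_zero 0⟩
  | add y z _ _ hy hz =>
    obtain ⟨u, hu, v, hv, rfl⟩ := hy
    obtain ⟨u', hu', v', hv', rfl⟩ := hz
    exact ⟨u + u', M.add_mem hu hu', v + v', M.add_mem hv hv', add_sub_add_comm u u' v v'⟩
  | neg y _ hy =>
    obtain ⟨u, hu, v, hv, rfl⟩ := hy
    exact ⟨v, hv, u, hu, (neg_sub u v).symm⟩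

theorem map_eq_zero_of_zsmul_mem_closure {s : Set G} {φ : G →+ ℤ} (hφ : ∀ y ∈ s, φ y = 0)
    {k : ℤ} (hk : k ≠ 0) {x : G} (hkx : k • x ∈ AddSubgroup.closure s) : φ x = 0 := by
  have hker : AddSubgroup.closure s ≤ φ.ker := (AddSubgroup.closure_le _).2 hφ
  have : k * φ x = 0 := by simpa using hker hkx
  exact (mul_eq_zero.1 this).resolve_left hk

theorem AddSubmonoid.eventually_mem_of_mem_of_add_one_mem (S : AddSubmonoid ℤ) {t : ℕ}
    (ht : (t : ℤ) ∈ S) (ht' : (t : ℤ) + 1 ∈ S) : ∀ᶠ m in atTop, m ∈ S := by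
  filter_upwards [eventually_ge_atTop ((t * t : ℕ) : ℤ)] with m hm
  lift m to ℕ using (Int.natCast_nonneg _).trans hm
  have hm : t * t ≤ m := by exact_mod_cast hm
  have hdecomp : m % t * (t + 1) + (m / t - m % t) * t = m := by
    rcases t.eq_zero_or_pos with rfl | htpos
    · simp
    have hrq : m % t ≤ m / t :=
      (Nat.mod_lt m htpos).le.trans ((Nat.le_div_iff_mul_le htpos).2 hm)
    have hdiv := Nat.div_add_mod' m t
    generalize m / t = q at hrq hdiv ⊢
    generalize m % t = r at hrq hdiv ⊢
    zify [hrq] at hdiv ⊢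
    linear_combination hdiv
  apply_fun ((↑) : ℕ → ℤ) at hdecomp
  push_cast [← nsmul_eq_mul] at hdecomp
  rw [← hdecomp]
  exact S.add_mem (S.nsmul_mem ht' _) (S.nsmul_mem ht _)

theorem AddSubmonoid.eventually_mem_map_of_surjective (M : AddSubmonoid G)
    (hM : AddSubgroup.closure (M : Set G) = ⊤) {φ : G →+ ℤ} (hφ : Function.Surjective φ)
    (hpos : ∀ y ∈ M, 0 ≤ φ y) : ∀ᶠ m in atTop, m ∈ M.map φ := by
  obtain ⟨z, hz⟩ := hφ 1
  obtain ⟨u, hu, v, hv, rfl⟩ := M.exists_sub_eq_of_mem_closure (hM ▸ AddSubgroup.mem_top z)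
  lift φ v to ℕ using hpos v hv with t ht
  refine (M.map φ).eventually_mem_of_mem_of_add_one_mem ⟨v, hv, ht.symm⟩ ⟨u, hu, ?_⟩
  rw [ht]
  linear_combination hz - map_sub φ u v

theorem AddSubmonoid.exists_mem_forall_eq_zero_or_pos {R : Type*} [AddCommMonoid R]
    [PartialOrder R] [IsOrderedAddMonoid R] (F : AddSubmonoid G) (Φ : Finset (G →+ R))
    (hΦ : ∀ φ ∈ Φ, ∀ y ∈ F, 0 ≤ φ y) : ∃ w ∈ F, ∀ φ ∈ Φ, (∀ y ∈ F, φ y = 0) ∨ 0 < φ w := by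
  have hwitness : ∀ φ : G →+ R, ∃ y ∈ F, (∀ z ∈ F, φ z = 0) ∨ φ y ≠ 0 := by
    intro φ
    by_cases h : ∀ z ∈ F, φ z = 0
    · exact ⟨0, F.zero_mem, Or.inl h⟩
    · push Not at h
      obtain ⟨y, hy, hφy⟩ := h
      exact ⟨y, hy, Or.inr hφy⟩
  choose wf hwf hwfφ using hwitness
  refine ⟨∑ φ ∈ Φ, wf φ, F.sum_mem fun φ _ => hwf φ,
    fun φ hφ => (hwfφ φ).imp_right fun hne => ?_⟩
  rw [map_sum]
  exact ((hΦ φ hφ _ (hwf φ)).lt_of_ne' hne).trans_le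
    (Finset.single_le_sum (fun ψ _ => hΦ φ hφ _ (hwf ψ)) hφ)

theorem AddSubmonoid.exists_add_nsmul_mem (M : AddSubmonoid G) (Φ : Finset (G →+ ℤ))
    (hM : {y | ∀ φ ∈ Φ, φ y ∈ φ '' M} ⊆ M) (hlarge : ∀ φ ∈ Φ, ∀ᶠ m in atTop, m ∈ M.map φ)
    {x w : G} (hxw : ∀ φ ∈ Φ, (φ x = 0 ∧ φ w = 0) ∨ 0 < φ w) : ∃ N : ℕ, x + N • w ∈ M := by
  suffices ∀ᶠ N : ℕ in atTop, ∀ φ ∈ Φ, φ (x + N • w) ∈ M.map φ from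
    this.exists.imp fun N hN => hM hN
  refine (eventually_all_finset Φ).2 fun φ hφ => ?_
  simp only [map_add, map_nsmul]
  rcases hxw φ hφ with ⟨hx, hw⟩ | hw
  · exact Eventually.of_forall fun N => by simp [hx, hw]
  · exact (tendsto_atTop_add_const_left _ _ (tendsto_id.atTop_nsmul_const hw)).eventually
      (hlarge φ hφ)

end

theorem face_group_saturated_of_scored_general {d n : ℕ}
    (a : Fin n → Fin d → ℤ) (hgen : AddSubgroup.closure (Set.range a) = ⊤)
    (Φ : Finset ((Fin d → ℤ) →+ ℤ))
    (hsurj : ∀ φ ∈ Φ, Function.Surjective φ)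
    (hnonneg : ∀ φ ∈ Φ, ∀ i, 0 ≤ φ (a i))
    (hscored : (NA a : Set (Fin d → ℤ)) =
      {x | ∀ φ ∈ Φ, φ x ∈ φ '' (NA a : Set (Fin d → ℤ))})
    (ψ : (Fin d → ℤ) →+ ℤ)
    (x : Fin d → ℤ) (hx : ∃ k : ℕ, 1 ≤ k ∧ (k : ℤ) • x ∈ Gface a ψ) :
    x ∈ Gface a ψ := by
  obtain ⟨k, hk, hkx⟩ := hx
  have hk0 : (k : ℤ) ≠ 0 := by omega
  set F : AddSubmonoid (Fin d → ℤ) := NA a ⊓ AddMonoidHom.mker ψ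
  change _ ∈ AddSubgroup.closure (F : Set (Fin d → ℤ)) at hkx ⊢
  have hNA_closure : AddSubgroup.closure (NA a : Set (Fin d → ℤ)) = ⊤ :=
    top_unique (hgen ▸ AddSubgroup.closure_mono AddSubmonoid.subset_closure)
  have hNA_nonneg : ∀ φ ∈ Φ, ∀ y ∈ NA a, 0 ≤ φ y := fun φ hφ =>
    AddSubmonoid.closure_le (S := (AddSubmonoid.nonneg ℤ).comap φ).2
      (Set.range_subset_iff.2 (hnonneg φ hφ))
  obtain ⟨w, hwF, hw⟩ :=
    F.exists_mem_forall_eq_zero_or_pos Φ fun φ hφ y hy => hNA_nonneg φ hφ y hy.1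
  have hψx : ψ x = 0 := map_eq_zero_of_zsmul_mem_closure (fun y hy => hy.2) hk0 hkx
  obtain ⟨N, hN⟩ := (NA a).exists_add_nsmul_mem Φ hscored.superset
    (fun φ hφ => (NA a).eventually_mem_map_of_surjective hNA_closure (hsurj φ hφ)
      (hNA_nonneg φ hφ))
    (fun φ hφ => (hw φ hφ).imp_left fun h =>
      ⟨map_eq_zero_of_zsmul_mem_closure h hk0 hkx, h w hwF⟩)
  have hψw : ψ w = 0 := hwF.2
  have hxNw : x + N • w ∈ F :=
    ⟨hN, show ψ (x + N • w) = 0 by rw [map_add, map_nsmul, hψx, hψw, smul_zero, add_zero]⟩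
  simpa using sub_mem (AddSubgroup.subset_closure hxNw)
    (nsmul_mem (AddSubgroup.subset_closure hwF) N)

/-- If `ℕA` is scored w.r.t. `Φ`, then for every group homomorphism
`ψ : ℤ^d → ℤ` with `ψ(aᵢ) ≥ 0` for all `i`, the subgroup `G_ψ` is saturated in `ℤ^d`:
`k·x ∈ G_ψ` for some `k ≥ 1` implies `x ∈ G_ψ`. -/
theorem face_group_saturated_of_scored {d n : ℕ} (hd : 0 < d) (hn : 0 < n)
    (a : Fin n → Fin d → ℤ) (hgen : AddSubgroup.closure (Set.range a) = ⊤)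
    (Φ : Finset ((Fin d → ℤ) →+ ℤ))
    (hsurj : ∀ φ ∈ Φ, Function.Surjective φ)
    (hnonneg : ∀ φ ∈ Φ, ∀ i, 0 ≤ φ (a i))
    (hscored : (NA a : Set (Fin d → ℤ)) =
      {x | ∀ φ ∈ Φ, φ x ∈ φ '' (NA a : Set (Fin d → ℤ))})
    (ψ : (Fin d → ℤ) →+ ℤ) (hψ : ∀ i, 0 ≤ ψ (a i))
    (x : Fin d → ℤ) (hx : ∃ k : ℕ, 1 ≤ k ∧ (k : ℤ) • x ∈ Gface a ψ) :
    x ∈ Gface a ψ :=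
  face_group_saturated_of_scored_general a hgen Φ hsurj hnonneg hscored ψ x hx
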